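/- arXiv:1505.00321 — 2 statements merged into one kernel-verified Lean document; each statement's English description precedes it below -/
import Mathlib

section
/- Let X be a finite connected graph of genus g and let G be a finite group acting on X without invertible edges. Let the factor graph X/G have as vertices the G-orbits of V(X) and as edges the G-orbits of E(X), with genus g(X/G) = 1 − #(G-orbits on V(X)) + #(G-orbits on E(X)). Then g − 1 = |G|·(g(X/G) − 1) + Σ_{v ∈ V(X)} (|G^v| − 1) − Σ_{e ∈ E(X)} (|G^e| − 1). -/
/-!
For a finite group `G` acting on a finite set `X`, counting the pairs `(g, x)` with `g • x = x`
gives `∑ₓ |Gₓ| = |G| · |X/G|` (the bijection behind Burnside's lemma), i.e.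
`∑ₓ (|Gₓ| - 1) = |G| · |X/G| - |X|`. Apply this to the vertices and to the edges, and subtract.
Since no edge `{x, λx}` is inverted, an element stabilising it setwise must fix `x` and `λx`, so
its setwise and pointwise stabilisers agree.
-/

open MulAction

namespace MulAction

variable {G α : Type*} [Group G] [MulAction G α]

theorem sum_card_stabilizer_eq_card_orbits_mul_card_group [Fintype α] [Finite G] :
    ∑ a : α, Nat.card (stabilizer G a) = Nat.card (orbitRel.Quotient G α) * Nat.card G := by
  rw [← Nat.card_sigma, ← Nat.card_prod]
  refine Nat.card_congr (Equiv.trans ?_ (sigmaFixedByEquivOrbitsProdGroup G α))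
  exact (Equiv.subtypeProdEquivSigmaSubtype fun (a : α) (g : G) => g ∈ stabilizer G a).symm.trans
    (((Equiv.prodComm α G).subtypeEquiv fun _ => Iff.rfl).trans
      (Equiv.subtypeProdEquivSigmaSubtype fun (g : G) (a : α) => g • a = a))

theorem card_setOf_exists_eq_orbit :
    Nat.card {s : Set α | ∃ a, s = orbit G a} = Nat.card (orbitRel.Quotient G α) := by
  have : {s : Set α | ∃ a, s = orbit G a} = Set.range (orbitRel.Quotient.orbit (G := G)) := by
    ext s
    constructor
    · rintro ⟨a, rfl⟩
      exact ⟨Quotient.mk'' a, orbitRel.Quotient.orbit_mk a⟩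
    · rintro ⟨q, rfl⟩
      induction q using Quotient.inductionOn' with
      | h a => exact ⟨a, (orbitRel.Quotient.orbit_mk a).symm⟩
  rw [this, Nat.card_range_of_injective orbitRel.Quotient.orbit_injective]

theorem card_setOf_exists_mem_eq_orbit (p : SubMulAction G α) :
    Nat.card {s : Set α | ∃ a ∈ p, s = orbit G a} = Nat.card (orbitRel.Quotient G p) := by
  have : {s : Set α | ∃ a ∈ p, s = orbit G a} =
      Set.image Subtype.val '' {s : Set p | ∃ a, s = orbit G a} := by
    ext s
    simp [SubMulAction.val_image_orbit, eq_comm]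
  rw [this, Nat.card_image_of_injective (Set.image_injective.2 Subtype.val_injective),
    card_setOf_exists_eq_orbit]

theorem finsum_card_stabilizer_sub_one [Finite α] [Finite G] :
    ∑ᶠ a : α, ((Nat.card (stabilizer G a) : ℤ) - 1)
      = Nat.card {s : Set α | ∃ a, s = orbit G a} * Nat.card G - Nat.card α := by
  have := Fintype.ofFinite α
  rw [finsum_eq_sum_of_fintype, Finset.sum_sub_distrib, ← Nat.cast_sum,
    sum_card_stabilizer_eq_card_orbits_mul_card_group, card_setOf_exists_eq_orbit]
  simp [Nat.card_eq_fintype_card]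

theorem finsum_mem_card_stabilizer_sub_one [Finite G] {S : Set α} [Finite S]
    (hS : ∀ g : G, ∀ a ∈ S, g • a ∈ S) :
    ∑ᶠ a ∈ S, ((Nat.card (stabilizer G a) : ℤ) - 1)
      = Nat.card {s : Set α | ∃ a ∈ S, s = orbit G a} * Nat.card G - Nat.card S := by
  let p : SubMulAction G α := ⟨S, fun g _ ha => hS g _ ha⟩
  rw [← finsum_set_coe_eq_finsum_mem]
  change ∑ᶠ a : p, ((Nat.card (stabilizer G (a : α)) : ℤ) - 1)
    = Nat.card {s : Set α | ∃ a ∈ p, s = orbit G a} * Nat.card G - Nat.card p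
  rw [card_setOf_exists_mem_eq_orbit, ← card_setOf_exists_eq_orbit, ← finsum_card_stabilizer_sub_one]
  simp only [SubMulAction.stabilizer_of_subMul]

end MulAction

namespace Sym2

variable {G α : Type*} [Group G] [MulAction G α]

instance : MulAction G (Sym2 α) where
  smul g e := Sym2.map (fun y => g • y) e
  one_smul e := by
    change Sym2.map _ e = e
    simp
  mul_smul g h e := by
    change Sym2.map _ e = Sym2.map _ (Sym2.map _ e)
    simp [Sym2.map_map, mul_smul]

theorem smul_mk (g : G) (x y : α) : g • s(x, y) = s(g • x, g • y) := rfl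

theorem smul_mk_eq_self_iff {g : G} {x y : α} (h : g • x ≠ y) :
    g • s(x, y) = s(x, y) ↔ ∀ z ∈ s(x, y), g • z = z := by
  rw [smul_mk, Sym2.eq_iff]
  constructor
  · rintro (⟨hx, hy⟩ | ⟨hxy, -⟩)
    · simp [hx, hy]
    · exact absurd hxy h
  · intro hfix
    exact Or.inl ⟨hfix x (mem_mk_left x y), hfix y (mem_mk_right x y)⟩

theorem smul_mem_setOf_mk_of_equivariant {bar : α → α}
    (hbar : ∀ (g : G) (x : α), bar (g • x) = g • bar x) (g : G) {e : Sym2 α}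
    (he : e ∈ {e : Sym2 α | ∃ x : α, e = s(x, bar x)}) :
    g • e ∈ {e : Sym2 α | ∃ x : α, e = s(x, bar x)} := by
  obtain ⟨x, rfl⟩ := he
  exact ⟨g • x, by rw [smul_mk, hbar]⟩

end Sym2

theorem riemann_hurwitz_no_invertible_edges_general
    {V D G : Type} [Fintype V] [Fintype D]
    [Group G] [Fintype G] [MulAction G D] [MulAction G V]
    (bar : D → D)
    (hbar_equiv : ∀ (g : G) (x : D), bar (g • x) = g • bar x)
    (E : Set (Sym2 D)) (hE : E = {e : Sym2 D | ∃ x : D, e = Sym2.mk x (bar x)})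
    (hnoinv : ∀ (x : D) (g : G), g • x ≠ bar x)
    (g gQ : ℤ)
    (hg : g = 1 - (Nat.card V : ℤ) + (Nat.card E : ℤ))
    (hgQ : gQ = 1 - (Nat.card {s : Set V | ∃ v : V, s = MulAction.orbit G v} : ℤ) + (Nat.card {s : Set (Sym2 D) | ∃ e ∈ E, s = {e' : Sym2 D | ∃ g : G, Sym2.map (fun y => g • y) e = e'}} : ℤ)) :
    g - 1 = (Nat.card G : ℤ) * (gQ - 1)
      + (∑ᶠ v : V, ((Nat.card (MulAction.stabilizer G v) : ℤ) - 1))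
      - (∑ᶠ e ∈ E, ((Nat.card {g : G | ∀ y ∈ e, g • y = y} : ℤ) - 1)) := by
  subst hg hgQ
  have hEinv : ∀ g : G, ∀ e ∈ E, g • e ∈ E := by
    subst hE
    exact fun g _ he => Sym2.smul_mem_setOf_mk_of_equivariant hbar_equiv g he
  have hstab : ∀ e ∈ E, Nat.card {g : G | ∀ y ∈ e, g • y = y} = Nat.card (stabilizer G e) := by
    subst hE
    rintro e ⟨x, rfl⟩
    exact Nat.card_congr
      (Equiv.subtypeEquivRight fun g => (Sym2.smul_mk_eq_self_iff (hnoinv x g)).symm)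
  have horbits : {s : Set (Sym2 D) | ∃ e ∈ E, s = {e' | ∃ g : G, Sym2.map (fun y => g • y) e = e'}}
      = {s | ∃ e ∈ E, s = orbit G e} := rfl
  rw [horbits, finsum_mem_congr rfl fun e he => by rw [hstab e he],
    finsum_card_stabilizer_sub_one, finsum_mem_card_stabilizer_sub_one hEinv]
  ring

/-- A finite graph `X = (D, V; I, bar)`: `D` the darts, `V` the vertices,
`I` the incidence function, `bar` the fixed-point-free dart-reversing involution.
A finite group `G` acts on `X` via automorphisms (equivariantly and faithfully).
The edge set `E` consists of the unordered pairs `{x, bar x}`. -/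
theorem riemann_hurwitz_no_invertible_edges
    {V D G : Type} [Fintype V] [Fintype D] [Nonempty V]
    [Group G] [Fintype G] [MulAction G D] [MulAction G V]
    (I : D → V) (bar : D → D)
    (hbar_invol : ∀ x : D, bar (bar x) = x)
    (hbar_nofix : ∀ x : D, bar x ≠ x)
    (hI_equiv : ∀ (g : G) (x : D), I (g • x) = g • I x)
    (hbar_equiv : ∀ (g : G) (x : D), bar (g • x) = g • bar x)
    (hfaithful : ∀ g : G, (∀ x : D, g • x = x) → (∀ v : V, g • v = v) → g = 1)
    (E : Set (Sym2 D)) (hE : E = {e : Sym2 D | ∃ x : D, e = Sym2.mk x (bar x)})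
    (hconn : ∀ u v : V, Relation.ReflTransGen
      (fun a b : V => ∃ x : D, I x = a ∧ I (bar x) = b) u v)
    (hnoinv : ∀ (x : D) (g : G), g • x ≠ bar x)
    (g gQ : ℤ)
    (hg : g = 1 - (Nat.card V : ℤ) + (Nat.card E : ℤ))
    (hgQ : gQ = 1 - (Nat.card {s : Set V | ∃ v : V, s = MulAction.orbit G v} : ℤ) + (Nat.card {s : Set (Sym2 D) | ∃ e ∈ E, s = {e' : Sym2 D | ∃ g : G, Sym2.map (fun y => g • y) e = e'}} : ℤ)) :
    g - 1 = (Nat.card G : ℤ) * (gQ - 1)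
      + (∑ᶠ v : V, ((Nat.card (MulAction.stabilizer G v) : ℤ) - 1))
      - (∑ᶠ e ∈ E, ((Nat.card {g : G | ∀ y ∈ e, g • y = y} : ℤ) - 1)) :=
  riemann_hurwitz_no_invertible_edges_general bar hbar_equiv E hE hnoinv g gQ hg hgQ
end

section
/- Let X be a finite connected graph of genus g and let G be a finite group acting on X, possibly with invertible edges. Define the factor graph (X/G)_free whose vertices are the G-orbits of V(X) and whose edges are the G-orbits of the non-invertible edges of X (the loops arising from invertible edges being deleted), with genus g(X/G)_free = 1 − #(G-orbits on V(X)) + #(G-orbits on E(X) \ E^inv(X)). Then g − 1 = |G|·(g(X/G)_free − 1) + Σ_{v ∈ V(X)} (|G^v| − 1) − Σ_{e ∈ E(X)} (|G^e| − 1) + Σ_{e ∈ E^inv(X)} |G^e|. -/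
/-!
Both sides equal `|E| - |V|`. By orbit–stabiliser, the stabiliser orders summed over one orbit
give `|G|`, so `∑ᵥ |G^v| = |G| · #(V/G)`. On an edge that is not invertible the pointwise and
setwise stabilisers coincide, so likewise `∑ |G^e| = |G| · #((E ∖ E^inv)/G)` over the
non-invertible edges; the sum over the invertible ones is exactly the correction term.
-/

open MulAction

namespace Sym2

variable {G α : Type*} [Group G] [MulAction G α]

instance inst_s2 : MulAction G (Sym2 α) where
  smul g := Sym2.map (g • ·)
  one_smul e := by
    induction e using Sym2.ind
    exact congrArg₂ (s(·, ·)) (one_smul G _) (one_smul G _)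
  mul_smul g h e := by
    induction e using Sym2.ind
    exact congrArg₂ (s(·, ·)) (mul_smul g h _) (mul_smul g h _)

theorem mem_smul_of_mem {g : G} {x : α} {e : Sym2 α} (hx : x ∈ e) : g • x ∈ g • e :=
  Sym2.mem_map.2 ⟨x, hx, rfl⟩

end Sym2

theorem finsum_mem_const_nat {α : Type*} {s : Set α} (hs : s.Finite) (c : ℕ) :
    ∑ᶠ _ ∈ s, c = s.ncard * c := by
  rw [← finsum_one, finsum_mem_mul' _ _ hs, finsum_mem_congr rfl fun _ _ => one_mul c]

theorem finsum_mem_sub_one {α : Type*} {s : Set α} (hs : s.Finite) (f : α → ℤ) :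
    ∑ᶠ a ∈ s, (f a - 1) = ∑ᶠ a ∈ s, f a - s.ncard := by
  rw [finsum_mem_sub_distrib _ _ hs, ← finsum_one, Nat.cast_finsum_mem hs, Nat.cast_one]

namespace MulAction

variable {G α : Type*} [Group G] [MulAction G α]

theorem finsum_mem_orbit_card_stabilizer [Finite α] (a : α) :
    ∑ᶠ b ∈ orbit G a, Nat.card (stabilizer G b) = Nat.card G := by
  have hconst : ∀ b ∈ orbit G a, Nat.card (stabilizer G b) = Nat.card (stabilizer G a) :=
    fun _ hb => Nat.card_congr (stabilizerEquivStabilizerOfOrbitRel hb).toEquiv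
  rw [finsum_mem_congr rfl hconst, finsum_mem_const_nat (Set.toFinite _), ← index_stabilizer,
    mul_comm, (stabilizer G a).card_mul_index]

theorem finsum_mem_card_stabilizer [Finite α] {S : Set α}
    (hS : ∀ g : G, ∀ a ∈ S, g • a ∈ S) :
    ∑ᶠ a ∈ S, Nat.card (stabilizer G a)
      = Nat.card G * Nat.card {O : Set α | ∃ a ∈ S, O = orbit G a} := by
  set orbits := {O : Set α | ∃ a ∈ S, O = orbit G a}
  have hunion : ⋃₀ orbits = S := by
    apply subset_antisymm
    · rintro _ ⟨_, ⟨a, ha, rfl⟩, g, rfl⟩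
      exact hS g a ha
    · exact fun a ha => ⟨_, ⟨a, ha, rfl⟩, mem_orbit_self a⟩
  have hdisj : orbits.PairwiseDisjoint id :=
    orbit.pairwiseDisjoint.subset (by rintro _ ⟨a, -, rfl⟩; exact ⟨a, rfl⟩)
  have horbit : ∀ O ∈ orbits, ∑ᶠ a ∈ O, Nat.card (stabilizer G a) = Nat.card G := by
    rintro _ ⟨a, -, rfl⟩
    exact finsum_mem_orbit_card_stabilizer a
  rw [← hunion, finsum_mem_sUnion hdisj (Set.toFinite _) (fun _ _ => Set.toFinite _),
    finsum_mem_congr rfl horbit,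
    finsum_mem_const_nat (Set.toFinite _), Nat.card_coe_set_eq, mul_comm]

end MulAction

section Edges

variable {D : Type*} (G : Type*) [Group G] [MulAction G D] (bar : D → D)

def edgeSet : Set (Sym2 D) := {e | ∃ x, e = s(x, bar x)}

def invertibleEdgeSet : Set (Sym2 D) :=
  {e | e ∈ edgeSet bar ∧ ∃ x ∈ e, ∃ g : G, g • x = bar x}

variable {G bar}

theorem smul_mem_edgeSet (hbar : ∀ (g : G) (x : D), bar (g • x) = g • bar x) (g : G)
    {e : Sym2 D} (he : e ∈ edgeSet bar) : g • e ∈ edgeSet bar := by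
  obtain ⟨x, rfl⟩ := he
  exact ⟨g • x, by rw [Sym2.smul_mk, hbar]⟩

theorem smul_mem_invertibleEdgeSet (hbar : ∀ (g : G) (x : D), bar (g • x) = g • bar x) (g : G)
    {e : Sym2 D} (he : e ∈ invertibleEdgeSet G bar) : g • e ∈ invertibleEdgeSet G bar := by
  obtain ⟨heE, x, hx, h, hh⟩ := he
  refine ⟨smul_mem_edgeSet hbar g heE, g • x, Sym2.mem_smul_of_mem hx, g * h * g⁻¹, ?_⟩
  rw [hbar, ← hh, smul_smul, smul_smul, inv_mul_cancel_right]

theorem smul_mem_edgeSet_diff_invertibleEdgeSet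
    (hbar : ∀ (g : G) (x : D), bar (g • x) = g • bar x) (g : G) {e : Sym2 D}
    (he : e ∈ edgeSet bar \ invertibleEdgeSet G bar) :
    g • e ∈ edgeSet bar \ invertibleEdgeSet G bar :=
  ⟨smul_mem_edgeSet hbar g he.1,
    fun hinv => he.2 (by simpa using smul_mem_invertibleEdgeSet hbar g⁻¹ hinv)⟩

theorem card_pointwise_stabilizer_eq {e : Sym2 D}
    (he : e ∈ edgeSet bar \ invertibleEdgeSet G bar) :
    Nat.card {g : G | ∀ y ∈ e, g • y = y} = Nat.card (stabilizer G e) := by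
  obtain ⟨⟨x, rfl⟩, hninv⟩ := he
  suffices {g : G | ∀ y ∈ s(x, bar x), g • y = y} = stabilizer G s(x, bar x) by rw [this]; rfl
  ext g
  simp only [Set.mem_ofPred_eq, Sym2.forall_mem_pair, SetLike.mem_coe, mem_stabilizer_iff,
    Sym2.smul_mk, Sym2.eq_iff, iff_self_or, and_imp]
  exact fun hswap _ => (hninv ⟨⟨x, rfl⟩, x, Sym2.mem_mk_left x _, g, hswap⟩).elim

theorem finsum_mem_card_pointwise_stabilizer [Finite D]
    (hbar : ∀ (g : G) (x : D), bar (g • x) = g • bar x) :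
    ∑ᶠ e ∈ edgeSet bar \ invertibleEdgeSet G bar, Nat.card {g : G | ∀ y ∈ e, g • y = y}
      = Nat.card G *
          Nat.card {O | ∃ e ∈ edgeSet bar \ invertibleEdgeSet G bar, O = orbit G e} := by
  rw [finsum_mem_congr rfl fun e he => card_pointwise_stabilizer_eq he]
  exact finsum_mem_card_stabilizer (smul_mem_edgeSet_diff_invertibleEdgeSet hbar)

end Edges

theorem riemann_hurwitz_free_general
    {V D G : Type} [Fintype V] [Fintype D]
    [Group G] [Fintype G] [MulAction G D] [MulAction G V]
    (bar : D → D)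
    (hbar_equiv : ∀ (g : G) (x : D), bar (g • x) = g • bar x)
    (E : Set (Sym2 D)) (hE : E = {e : Sym2 D | ∃ x : D, e = Sym2.mk x (bar x)})
    (Einv : Set (Sym2 D))
    (hEinv : Einv = {e : Sym2 D | e ∈ E ∧ ∃ x ∈ e, ∃ g : G, g • x = bar x})
    (g gQ : ℤ)
    (hg : g = 1 - (Nat.card V : ℤ) + (Nat.card E : ℤ))
    (hgQ : gQ = 1 - (Nat.card {s : Set V | ∃ v : V, s = MulAction.orbit G v} : ℤ) + (Nat.card {s : Set (Sym2 D) | ∃ e ∈ (E \ Einv), s = {e' : Sym2 D | ∃ g : G, Sym2.map (fun y => g • y) e = e'}} : ℤ)) :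
    g - 1 = (Nat.card G : ℤ) * (gQ - 1)
      + (∑ᶠ v : V, ((Nat.card (MulAction.stabilizer G v) : ℤ) - 1))
      - (∑ᶠ e ∈ E, ((Nat.card {g : G | ∀ y ∈ e, g • y = y} : ℤ) - 1))
      + (∑ᶠ e ∈ Einv, (Nat.card {g : G | ∀ y ∈ e, g • y = y} : ℤ)) := by
  obtain rfl : E = edgeSet bar := hE
  obtain rfl : Einv = invertibleEdgeSet G bar := hEinv
  have horbit (e : Sym2 D) : {e' | ∃ g : G, Sym2.map (fun y => g • y) e = e'} = orbit G e := rfl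
  simp only [horbit] at hgQ
  have hVertices : ∑ᶠ v : V, ((Nat.card (stabilizer G v) : ℤ) - 1)
      = Nat.card G * Nat.card {s : Set V | ∃ v : V, s = orbit G v} - Nat.card V := by
    rw [← finsum_mem_univ, finsum_mem_sub_one Set.finite_univ, Set.ncard_univ,
      ← Nat.cast_finsum_mem Set.finite_univ,
      finsum_mem_card_stabilizer (S := Set.univ) fun _ _ _ => trivial]
    simp only [Set.mem_univ, true_and, Nat.cast_mul]
  have hEdges : ∑ᶠ e ∈ edgeSet bar, ((Nat.card {g : G | ∀ y ∈ e, g • y = y} : ℤ) - 1)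
      = ∑ᶠ e ∈ invertibleEdgeSet G bar, (Nat.card {g : G | ∀ y ∈ e, g • y = y} : ℤ)
        + ∑ᶠ e ∈ edgeSet bar \ invertibleEdgeSet G bar,
            (Nat.card {g : G | ∀ y ∈ e, g • y = y} : ℤ)
        - Nat.card (edgeSet bar) := by
    rw [finsum_mem_sub_one (Set.toFinite _), Nat.card_coe_set_eq,
      finsum_mem_add_sdiff (fun _ he => he.1) (Set.toFinite _)]
  have hfree : ∑ᶠ e ∈ edgeSet bar \ invertibleEdgeSet G bar,
        (Nat.card {g : G | ∀ y ∈ e, g • y = y} : ℤ)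
      = Nat.card G *
          Nat.card {s | ∃ e ∈ edgeSet bar \ invertibleEdgeSet G bar, s = orbit G e} := by
    rw [← Nat.cast_finsum_mem (Set.toFinite _), finsum_mem_card_pointwise_stabilizer hbar_equiv,
      Nat.cast_mul]
  rw [hVertices, hEdges, hfree, hg, hgQ]
  ring

/-- A finite graph `X = (D, V; I, bar)`: `D` the darts, `V` the vertices,
`I` the incidence function, `bar` the fixed-point-free dart-reversing involution.
A finite group `G` acts on `X` via automorphisms (equivariantly and faithfully).
The edge set `E` consists of the unordered pairs `{x, bar x}`. -/
theorem riemann_hurwitz_free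
    {V D G : Type} [Fintype V] [Fintype D] [Nonempty V]
    [Group G] [Fintype G] [MulAction G D] [MulAction G V]
    (I : D → V) (bar : D → D)
    (hbar_invol : ∀ x : D, bar (bar x) = x)
    (hbar_nofix : ∀ x : D, bar x ≠ x)
    (hI_equiv : ∀ (g : G) (x : D), I (g • x) = g • I x)
    (hbar_equiv : ∀ (g : G) (x : D), bar (g • x) = g • bar x)
    (hfaithful : ∀ g : G, (∀ x : D, g • x = x) → (∀ v : V, g • v = v) → g = 1)
    (E : Set (Sym2 D)) (hE : E = {e : Sym2 D | ∃ x : D, e = Sym2.mk x (bar x)})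
    (hconn : ∀ u v : V, Relation.ReflTransGen
      (fun a b : V => ∃ x : D, I x = a ∧ I (bar x) = b) u v)
    (Einv : Set (Sym2 D))
    (hEinv : Einv = {e : Sym2 D | e ∈ E ∧ ∃ x ∈ e, ∃ g : G, g • x = bar x})
    (g gQ : ℤ)
    (hg : g = 1 - (Nat.card V : ℤ) + (Nat.card E : ℤ))
    (hgQ : gQ = 1 - (Nat.card {s : Set V | ∃ v : V, s = MulAction.orbit G v} : ℤ) + (Nat.card {s : Set (Sym2 D) | ∃ e ∈ (E \ Einv), s = {e' : Sym2 D | ∃ g : G, Sym2.map (fun y => g • y) e = e'}} : ℤ)) :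
    g - 1 = (Nat.card G : ℤ) * (gQ - 1)
      + (∑ᶠ v : V, ((Nat.card (MulAction.stabilizer G v) : ℤ) - 1))
      - (∑ᶠ e ∈ E, ((Nat.card {g : G | ∀ y ∈ e, g • y = y} : ℤ) - 1))
      + (∑ᶠ e ∈ Einv, (Nat.card {g : G | ∀ y ∈ e, g • y = y} : ℤ)) :=
  riemann_hurwitz_free_general bar hbar_equiv E hE Einv hEinv g gQ hg hgQ
end
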